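/- Let Ω be a union of n disjoint intervals of total length 1, spectral with spectrum Λ containing 0. If a, a+d, ..., a+(2n−1)d ∈ Λ for some reals a and d > 0, then the full arithmetic progression a + dℤ is contained in Λ; moreover d ∈ ℤ and Ω d-tiles ℝ. -/

import Mathlib

/-!
Write `F(ξ) = ∫_Ω e^{2πiξx}`. Integrating over each interval, `2πiξ F(ξ)` is an exponential sum
`g(ξ)` whose `2n` frequencies are the endpoints of the intervals. Orthogonality makes `g` vanish
on `Λ - Λ`, so for `λ ∈ Λ` the sequence `k ↦ g(a + kd - λ) = ∑ cᵢ uᵢ^k` vanishes for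
`0 ≤ k < 2n`, hence (Vandermonde) for every `k ∈ ℤ`. Thus `e^{2πi(a+kd)x}` is orthogonal to all
the exponentials of `Λ` other than itself, and completeness forces `a + kd ∈ Λ`.

Taking `λ = a` gives `F(kd) = 0` for `k ≠ 0`. Up to the factor `d`, these are the nonzero Fourier
coefficients of the `1/d`-periodic function `x ↦ ∑ₖ 1_Ω(x + k/d)`, which is therefore a.e. equal
to its mean `d |Ω| = d`. It is integer-valued, so `d ∈ ℕ`.
-/

open MeasureTheory

/-- `Λ` is a spectrum for `Ω`: the exponentials `e^{2πiλx}`, `λ ∈ Λ`, restricted to `Ω`,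
are mutually orthogonal and complete in `L²(Ω)`. -/
def IsSpectrum (Ω Λ : Set ℝ) : Prop :=
  (∀ l ∈ Λ, ∀ m ∈ Λ, l ≠ m →
      (∫ x in Ω, Complex.exp (2 * (Real.pi : ℂ) * Complex.I * ((l : ℂ) - (m : ℂ)) * (x : ℂ))) = 0) ∧
  (∀ f : ℝ → ℂ, MemLp f 2 (volume.restrict Ω) →
      (∀ l ∈ Λ,
        (∫ x in Ω, f x * Complex.exp (-(2 * (Real.pi : ℂ) * Complex.I * (l : ℂ) * (x : ℂ)))) = 0) →
      f =ᵐ[volume.restrict Ω] 0)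

open Complex Real Set Finset Bornology
open scoped Pointwise ENNReal

/-- The Fourier transform of `1_Ω`, with the sign convention of `IsSpectrum` (opposite to
Mathlib's `𝓕`). -/
noncomputable def charFT (Ω : Set ℝ) (ξ : ℝ) : ℂ :=
  ∫ x in Ω, exp (2 * π * I * ξ * x)

noncomputable def expSum {ι : Type*} [Fintype ι] (w : ι → ℂ) (b : ι → ℝ) (ξ : ℝ) : ℂ :=
  ∑ i, w i * exp (2 * π * I * ξ * b i)

lemma two_pi_I_mul_ne_zero {ξ : ℝ} (hξ : ξ ≠ 0) : 2 * π * I * (ξ : ℂ) ≠ 0 := by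
  simp [hξ, pi_ne_zero, I_ne_zero]

lemma norm_exp_two_pi_I_mul (ξ x : ℝ) : ‖exp (2 * π * I * ξ * x)‖ = 1 := by
  rw [show 2 * π * I * ξ * x = ((2 * π * ξ * x : ℝ) : ℂ) * I by push_cast; ring]
  exact norm_exp_ofReal_mul_I _

lemma Continuous.integrableOn_of_isBounded {E : Type*} [NormedAddCommGroup E] {g : ℝ → E}
    (hg : Continuous g) {s : Set ℝ} (hs : IsBounded s) : IntegrableOn g s :=
  (hg.locallyIntegrable.integrableOn_isCompact hs.isCompact_closure).mono_set subset_closure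

section ExpSum

variable {ι : Type*} [Fintype ι]

theorem sum_mul_eq_zero_of_sum_mul_pow_eq_zero {K : Type*} [Field K] {c u : ι → K}
    (h : ∀ k < Fintype.card ι, ∑ i, c i * u i ^ k = 0) (f : K → K) :
    ∑ i, c i * f (u i) = 0 := by
  classical
  set P := Lagrange.interpolate (univ.image u) id f
  have hP : ∀ i, f (u i) = P.eval (u i) := fun i =>
    (Lagrange.eval_interpolate_at_node f (Set.injOn_id _) (mem_image_of_mem u (mem_univ i))).symm
  have hdeg : P.degree < Fintype.card ι :=
    (Lagrange.degree_interpolate_lt (r := f) (Set.injOn_id _)).trans_le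
      (by exact_mod_cast card_image_le.trans card_univ.le)
  simp_rw [hP, Polynomial.eval_eq_sum, Polynomial.sum, mul_sum, mul_left_comm (c _)]
  rw [sum_comm]
  refine sum_eq_zero fun k hk => ?_
  rw [← mul_sum, h k, mul_zero]
  exact_mod_cast (Polynomial.le_degree_of_ne_zero (Polynomial.mem_support_iff.mp hk)).trans_lt hdeg

lemma expSum_add_intCast_mul (w : ι → ℂ) (b : ι → ℝ) (t δ : ℝ) (k : ℤ) :
    expSum w b (t + k * δ) =
      ∑ i, w i * exp (2 * π * I * t * b i) * exp (2 * π * I * δ * b i) ^ k := by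
  refine sum_congr rfl fun i _ => ?_
  rw [mul_assoc (w i), ← exp_int_mul, ← Complex.exp_add]
  push_cast
  ring_nf

theorem expSum_add_intCast_mul_eq_zero {w : ι → ℂ} {b : ι → ℝ} {t δ : ℝ}
    (h : ∀ k : ℕ, k < Fintype.card ι → expSum w b (t + k * δ) = 0) (k : ℤ) :
    expSum w b (t + k * δ) = 0 := by
  rw [expSum_add_intCast_mul]
  refine sum_mul_eq_zero_of_sum_mul_pow_eq_zero (fun k hk => ?_) (· ^ (k : ℤ))
  have hk := h k hk
  rw [← Int.cast_natCast, expSum_add_intCast_mul] at hk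
  simpa using hk

end ExpSum

theorem charFT_iUnion_Ico_mul {ι : Type*} [Fintype ι] {a r : ι → ℝ} (hr : ∀ j, 0 ≤ r j)
    (hdisj : Pairwise (Function.onFun Disjoint fun j => Ico (a j) (a j + r j))) (ξ : ℝ) :
    charFT (⋃ j, Ico (a j) (a j + r j)) ξ * (2 * π * I * ξ) =
      expSum (Sum.elim 1 (-1)) (Sum.elim (a + r) a) ξ := by
  rcases eq_or_ne ξ 0 with rfl | hξ
  · simp [expSum]
  rw [charFT, integral_iUnion (fun j => measurableSet_Ico) hdisj
      (integrableOn_finite_iUnion.2 fun j =>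
        (by fun_prop : Continuous fun x : ℝ => exp (2 * π * I * ξ * x)).integrableOn_of_isBounded
          (Metric.isBounded_Ico _ _)),
    tsum_fintype, sum_mul, expSum, Fintype.sum_sum_type, ← sum_add_distrib]
  refine sum_congr rfl fun j _ => ?_
  rw [integral_Ico_eq_integral_Ioc, ← intervalIntegral.integral_of_le (by linarith [hr j])]
  rw [integral_exp_mul_complex (two_pi_I_mul_ne_zero hξ),
    div_mul_cancel₀ _ (two_pi_I_mul_ne_zero hξ)]
  simp [sub_eq_add_neg]

namespace IsSpectrum

variable {Ω Λ : Set ℝ}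

lemma charFT_sub_eq_zero (h : IsSpectrum Ω Λ) {l m : ℝ} (hl : l ∈ Λ) (hm : m ∈ Λ)
    (hlm : l ≠ m) : charFT Ω (l - m) = 0 := by
  simpa [charFT] using h.1 l hl m hm hlm

lemma mem_of_charFT_sub_eq_zero (h : IsSpectrum Ω Λ) (hΩ0 : volume Ω ≠ 0) (hΩ : volume Ω ≠ ∞)
    {ξ : ℝ} (hξ : ∀ l ∈ Λ, l ≠ ξ → charFT Ω (ξ - l) = 0) : ξ ∈ Λ := by
  by_contra hξΛ
  have : IsFiniteMeasure (volume.restrict Ω) := isFiniteMeasure_restrict.2 hΩ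
  have hL2 : MemLp (fun x : ℝ => exp (2 * π * I * ξ * x)) 2 (volume.restrict Ω) :=
    MemLp.of_bound (by fun_prop : Continuous _).aestronglyMeasurable 1
      (ae_of_all _ fun x => (norm_exp_two_pi_I_mul ξ x).le)
  have hzero := h.2 _ hL2 fun l hl => by
    rw [← hξ l hl (ne_of_mem_of_not_mem hl hξΛ), charFT]
    congr 1 with x
    rw [← Complex.exp_add]
    push_cast
    ring_nf
  have : (ae (volume.restrict Ω)).NeBot := ae_restrict_neBot.2 hΩ0
  obtain ⟨x, hx⟩ := hzero.exists
  exact exp_ne_zero _ hx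

variable {ι : Type*} [Fintype ι] {w : ι → ℂ} {b : ι → ℝ} {a d : ℝ}

theorem charFT_add_intCast_mul_sub_eq_zero (h : IsSpectrum Ω Λ)
    (hG : ∀ ξ : ℝ, charFT Ω ξ * (2 * π * I * ξ) = expSum w b ξ)
    (hAP : ∀ k : ℕ, k < Fintype.card ι → a + k * d ∈ Λ) {l : ℝ} (hl : l ∈ Λ) (k : ℤ)
    (hne : a + k * d ≠ l) : charFT Ω (a + k * d - l) = 0 := by
  have hΛ : ∀ l ∈ Λ, ∀ m ∈ Λ, expSum w b (l - m) = 0 := fun l hl m hm => by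
    rw [← hG]
    rcases eq_or_ne l m with rfl | hlm
    · simp
    · rw [h.charFT_sub_eq_zero hl hm hlm, zero_mul]
  have hexp := expSum_add_intCast_mul_eq_zero (t := a - l) (δ := d)
    (fun k hk => by rw [sub_add_eq_add_sub]; exact hΛ _ (hAP k hk) l hl) k
  rw [sub_add_eq_add_sub, ← hG] at hexp
  exact (mul_eq_zero.1 hexp).resolve_right (two_pi_I_mul_ne_zero (sub_ne_zero.2 hne))

theorem add_intCast_mul_mem (h : IsSpectrum Ω Λ) (hΩ0 : volume Ω ≠ 0) (hΩ : volume Ω ≠ ∞)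
    (hG : ∀ ξ : ℝ, charFT Ω ξ * (2 * π * I * ξ) = expSum w b ξ)
    (hAP : ∀ k : ℕ, k < Fintype.card ι → a + k * d ∈ Λ) (k : ℤ) : a + k * d ∈ Λ :=
  h.mem_of_charFT_sub_eq_zero hΩ0 hΩ fun _ hl hne =>
    h.charFT_add_intCast_mul_sub_eq_zero hG hAP hl k hne.symm

theorem charFT_intCast_mul_eq_zero (h : IsSpectrum Ω Λ) (hΩ0 : volume Ω ≠ 0) (hΩ : volume Ω ≠ ∞)
    (hG : ∀ ξ : ℝ, charFT Ω ξ * (2 * π * I * ξ) = expSum w b ξ)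
    (hAP : ∀ k : ℕ, k < Fintype.card ι → a + k * d ∈ Λ) (hd : d ≠ 0) {k : ℤ} (hk : k ≠ 0) :
    charFT Ω (k * d) = 0 := by
  have ha : a ∈ Λ := by simpa using h.add_intCast_mul_mem hΩ0 hΩ hG hAP 0
  simpa using h.charFT_add_intCast_mul_sub_eq_zero hG hAP ha k (by simp [hk, hd])

end IsSpectrum

lemma ae_restrict_eq_zero_of_fourierCoeffOn_eq_zero {a b : ℝ} (hab : a < b) {f : ℝ → ℂ}
    (hf : MemLp f 2 (volume.restrict (Ioc a b))) (h : ∀ n, fourierCoeffOn hab f n = 0) :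
    f =ᵐ[volume.restrict (Ioc a b)] 0 := by
  have hParseval := tsum_sq_fourierCoeffOn hab hf
  simp only [h, norm_zero, ne_eq, OfNat.ofNat_ne_zero, not_false_eq_true, zero_pow, tsum_zero,
    intervalIntegral.integral_of_le hab.le] at hParseval
  have hint : ∫ x in Ioc a b, ‖f x‖ ^ 2 = 0 :=
    (smul_eq_zero.1 hParseval.symm).resolve_left (inv_ne_zero (sub_pos.2 hab).ne')
  filter_upwards [(integral_eq_zero_iff_of_nonneg (fun x => by positivity)
    (hf.integrable_norm_pow two_ne_zero)).1 hint] with x hx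
  simpa using hx

lemma fourierCoeffOn_const {a b : ℝ} (hab : a < b) (C : ℂ) (n : ℤ) :
    fourierCoeffOn hab (fun _ => C) n = if n = 0 then C else 0 := by
  have := Fact.mk (sub_pos.2 hab)
  have hC : (fun _ : AddCircle (b - a) => C) = fun x => C * fourier 0 x := by simp
  rw [fourierCoeffOn, show AddCircle.liftIoc (b - a) a (fun _ => C) = fun _ => C from rfl, hC,
    fourierCoeff.const_mul, fourierCoeff_fourier]
  split_ifs with hn <;> simp [hn]

lemma fourierCoeffOn_sub_const {a b : ℝ} (hab : a < b) {f : ℝ → ℂ}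
    (hf : IntervalIntegrable f volume a b) (C : ℂ) (n : ℤ) :
    fourierCoeffOn hab (fun x => f x - C) n =
      fourierCoeffOn hab f n - if n = 0 then C else 0 := by
  have := Fact.mk (sub_pos.2 hab)
  rw [← fourierCoeffOn_const hab C n]
  simp only [fourierCoeffOn_eq_integral, smul_sub]
  rw [intervalIntegral.integral_sub, smul_sub]
  · exact hf.continuousOn_mul (by fun_prop)
  · exact intervalIntegrable_const.continuousOn_mul (by fun_prop)

noncomputable def tileCount (Ω : Set ℝ) (T x : ℝ) : ℝ :=
  ∑' k : ℤ, Ω.indicator (fun _ => 1) (x + k * T)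

section Tiling

variable {Ω : Set ℝ} {T : ℝ}

lemma exists_finset_add_intCast_mul_notMem (hΩ : IsBounded Ω) {W : Set ℝ} (hW : IsBounded W)
    (hT : T ≠ 0) : ∃ S : Finset ℤ, ∀ x ∈ W, ∀ k ∉ S, x + k * T ∉ Ω := by
  have hfin : {k : ℤ | (k : ℝ) * T ∈ closure (Ω - W)}.Finite := by
    have := (Int.tendsto_zmultiplesHom_cofinite hT).eventually
      (hΩ.sub hW).isCompact_closure.compl_mem_cocompact
    simpa only [Filter.eventually_cofinite, zmultiplesHom_apply, zsmul_eq_mul, mem_compl_iff,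
      not_not] using this
  refine ⟨hfin.toFinset, fun x hx k hk hmem => hk ?_⟩
  rw [Set.Finite.mem_toFinset]
  exact subset_closure ⟨x + k * T, hmem, x, hx, by ring⟩

lemma tileCount_eq_sum {W : Set ℝ} {S : Finset ℤ} (hS : ∀ x ∈ W, ∀ k ∉ S, x + k * T ∉ Ω)
    {x : ℝ} (hx : x ∈ W) :
    tileCount Ω T x = ∑ k ∈ S, Ω.indicator (fun _ => 1) (x + k * T) :=
  tsum_eq_sum fun k hk => indicator_of_notMem (hS x hx k hk) _

lemma exists_tileCount_eq_natCast (hΩ : IsBounded Ω) (hT : T ≠ 0) (x : ℝ) :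
    ∃ m : ℕ, tileCount Ω T x = m := by
  classical
  obtain ⟨S, hS⟩ := exists_finset_add_intCast_mul_notMem hΩ isBounded_singleton hT
  rw [tileCount_eq_sum hS (mem_singleton x)]
  simp only [indicator_apply, sum_boole]
  exact ⟨_, rfl⟩

lemma memLp_tileCount (hΩm : MeasurableSet Ω) (hΩb : IsBounded Ω) (hT : T ≠ 0)
    {W : Set ℝ} (hWm : MeasurableSet W) (hWb : IsBounded W) :
    MemLp (fun x => (tileCount Ω T x : ℂ)) 2 (volume.restrict W) := by
  obtain ⟨S, hS⟩ := exists_finset_add_intCast_mul_notMem hΩb hWb hT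
  have : IsFiniteMeasure (volume.restrict W) := isFiniteMeasure_restrict.2 hWb.measure_lt_top.ne
  set ψ : ℝ → ℝ := fun x => ∑ k ∈ S, Ω.indicator (fun _ => 1) (x + k * T)
  have hψ : MemLp (fun x => (ψ x : ℂ)) 2 (volume.restrict W) := by
    refine MemLp.of_bound (Measurable.aestronglyMeasurable (by fun_prop (disch := exact hΩm)))
      S.card (ae_of_all _ fun x => ?_)
    rw [norm_real, norm_of_nonneg (sum_nonneg fun k _ => indicator_nonneg (by simp) _)]
    simpa using sum_le_card_nsmul S (fun k => Ω.indicator (fun _ => (1 : ℝ)) (x + k * T)) 1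
      fun k _ => indicator_le_self' (by simp) _
  refine hψ.ae_eq ?_
  filter_upwards [ae_restrict_mem hWm] with x hx
  rw [tileCount_eq_sum hS hx]

lemma hasSum_intervalIntegral_comp_add_intCast_mul {E : Type*} [NormedAddCommGroup E]
    [NormedSpace ℝ E] {F : ℝ → E} (hF : Integrable F) (hT : 0 < T) (c : ℝ) :
    HasSum (fun k : ℤ => ∫ x in c..c + T, F (x + k * T)) (∫ x, F x) := by
  have h := hasSum_integral_iUnion (fun _ => measurableSet_Ioc)
    (pairwise_disjoint_Ioc_add_zsmul c T) hF.integrableOn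
  rw [iUnion_Ioc_add_zsmul hT, setIntegral_univ] at h
  convert h using 2 with k
  rw [intervalIntegral.integral_comp_add_right, intervalIntegral.integral_of_le (by linarith)]
  simp only [zsmul_eq_mul, Int.cast_add, Int.cast_one, add_one_mul, add_right_comm c T, add_assoc]

theorem intervalIntegral_tileCount_mul (hΩm : MeasurableSet Ω) (hΩb : IsBounded Ω) (hT : 0 < T)
    {g : ℝ → ℂ} (hg : Function.Periodic g T) (hgΩ : IntegrableOn g Ω) (c : ℝ) :
    ∫ x in c..c + T, (tileCount Ω T x : ℂ) * g x = ∫ x in Ω, g x := by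
  obtain ⟨S, hS⟩ := exists_finset_add_intCast_mul_notMem hΩb (Metric.isBounded_Ioc c (c + T)) hT.ne'
  have hF : Integrable (Ω.indicator g) := hgΩ.integrable_indicator hΩm
  have hwindow : ∀ x ∈ Ioc c (c + T),
      (tileCount Ω T x : ℂ) * g x = ∑ k ∈ S, Ω.indicator g (x + k * T) := by
    intro x hx
    rw [tileCount_eq_sum hS hx, ofReal_sum, sum_mul]
    refine sum_congr rfl fun k _ => ?_
    by_cases hk : x + k * T ∈ Ω
    · simp [indicator_of_mem hk, hg.int_mul k x]
    · simp [indicator_of_notMem hk]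
  have hout : ∀ k ∉ S, ∫ x in c..c + T, Ω.indicator g (x + k * T) = 0 := fun k hk => by
    rw [intervalIntegral.integral_of_le (by linarith)]
    exact setIntegral_eq_zero_of_forall_eq_zero fun x hx => indicator_of_notMem (hS x hx k hk) _
  calc ∫ x in c..c + T, (tileCount Ω T x : ℂ) * g x
      = ∫ x in c..c + T, ∑ k ∈ S, Ω.indicator g (x + k * T) :=
        intervalIntegral.integral_congr_ae (ae_of_all _ fun x hx =>
          hwindow x (by rwa [uIoc_of_le (by linarith)] at hx))
    _ = ∑ k ∈ S, ∫ x in c..c + T, Ω.indicator g (x + k * T) :=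
        intervalIntegral.integral_finsetSum fun k _ => (hF.comp_add_right _).intervalIntegrable
    _ = ∫ x, Ω.indicator g x :=
        (hasSum_sum_of_ne_finset_zero hout).unique
          (hasSum_intervalIntegral_comp_add_intCast_mul hF hT c)
    _ = ∫ x in Ω, g x := integral_indicator hΩm

lemma fourierCoeffOn_tileCount (hΩm : MeasurableSet Ω) (hΩb : IsBounded Ω) (hT : 0 < T)
    (c : ℝ) (n : ℤ) :
    fourierCoeffOn (lt_add_of_pos_right c hT) (fun x => (tileCount Ω T x : ℂ)) n =
      T⁻¹ * charFT Ω (-n / T) := by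
  have := Fact.mk hT
  have hg : Function.Periodic (fun x : ℝ => fourier (-n) (x : AddCircle T)) T := fun x => by
    simp only [AddCircle.coe_add_period]
  rw [fourierCoeffOn_eq_integral, add_sub_cancel_left]
  simp_rw [smul_eq_mul, mul_comm (fourier (-n) _ : ℂ)]
  rw [intervalIntegral_tileCount_mul hΩm hΩb hT hg
    ((map_continuous _).comp (AddCircle.continuous_mk' T) |>.integrableOn_of_isBounded hΩb), charFT]
  simp only [fourier_coe_apply, one_div, real_smul, ofReal_inv]
  congr 2 with x
  push_cast
  ring_nf

theorem ae_tileCount_eq (hΩm : MeasurableSet Ω) (hΩb : IsBounded Ω) (hT : 0 < T)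
    (hF : ∀ k : ℤ, k ≠ 0 → charFT Ω (k / T) = 0) :
    ∀ᵐ x, tileCount Ω T x = volume.real Ω / T := by
  set C := volume.real Ω / T with hC
  have hwindow : ∀ c, ∀ᵐ x ∂volume.restrict (Ioc c (c + T)), tileCount Ω T x = C := by
    intro c
    have hL2 := memLp_tileCount hΩm hΩb hT.ne' measurableSet_Ioc (Metric.isBounded_Ioc c (c + T))
    have hcoeff : ∀ n, fourierCoeffOn (lt_add_of_pos_right c hT)
        (fun x => (tileCount Ω T x : ℂ) - C) n = 0 := by
      intro n
      rw [fourierCoeffOn_sub_const, fourierCoeffOn_tileCount hΩm hΩb hT]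
      · split_ifs with hn
        · simp [hn, hC, charFT, div_eq_inv_mul]
        · rw [show -(n : ℝ) / T = ((-n : ℤ) : ℝ) / T by push_cast; ring, hF _ (neg_ne_zero.2 hn)]
          simp
      · exact (intervalIntegrable_iff_integrableOn_Ioc_of_le (by linarith)).2
          (hL2.integrable one_le_two)
    filter_upwards
      [ae_restrict_eq_zero_of_fourierCoeffOn_eq_zero _ (hL2.sub (memLp_const _)) hcoeff] with x hx
    simpa [sub_eq_zero] using hx
  have h := (ae_restrict_iUnion_iff (fun k : ℤ => Ioc (k • T) ((k + 1) • T)) _).2 fun k => by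
    simpa only [add_one_zsmul] using hwindow (k • T)
  rwa [iUnion_Ioc_zsmul hT, Measure.restrict_univ] at h

end Tiling

theorem stmt10_general (n : ℕ) (aI r : Fin n → ℝ)
    (hr : ∀ j, 0 < r j) (hsum : ∑ j, r j = 1)
    (hdisj : Pairwise fun i j =>
      Disjoint (Set.Ico (aI i) (aI i + r i)) (Set.Ico (aI j) (aI j + r j)))
    (Ω : Set ℝ) (hΩ : Ω = ⋃ j, Set.Ico (aI j) (aI j + r j))
    (Λ : Set ℝ) (hspec : IsSpectrum Ω Λ)
    (a d : ℝ) (hd : 0 < d)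
    (hAP : ∀ i : ℕ, i < 2 * n → a + i * d ∈ Λ) :
    (∀ k : ℤ, a + k * d ∈ Λ) ∧
    (∃ m : ℕ, 0 < m ∧ d = m) ∧
    (∀ᵐ x : ℝ ∂volume, ∑' k : ℤ, Ω.indicator (fun _ => (1 : ℝ)) (x + k / d) = d) := by
  have hΩm : MeasurableSet Ω := hΩ ▸ MeasurableSet.iUnion fun j => measurableSet_Ico
  have hΩb : IsBounded Ω := hΩ ▸ isBounded_iUnion.2 fun j => Metric.isBounded_Ico _ _
  have hvol : volume.real Ω = 1 := by
    rw [hΩ, measureReal_iUnion_fintype hdisj (fun j => measurableSet_Ico) fun j => by simp]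
    simpa [(hr _).le] using hsum
  have hΩ0 : volume Ω ≠ 0 := fun h => by simp [measureReal_def, h] at hvol
  have hΩfin : volume Ω ≠ ∞ := hΩb.measure_lt_top.ne
  have hG := hΩ ▸ charFT_iUnion_Ico_mul (fun j => (hr j).le) hdisj
  have hAP' : ∀ k : ℕ, k < Fintype.card (Fin n ⊕ Fin n) → a + k * d ∈ Λ := fun k hk =>
    hAP k (by simpa [two_mul] using hk)
  have htile := ae_tileCount_eq hΩm hΩb (inv_pos.2 hd) fun k hk => by
    simpa using hspec.charFT_intCast_mul_eq_zero hΩ0 hΩfin hG hAP' hd.ne' hk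
  simp only [hvol, one_div, inv_inv] at htile
  refine ⟨hspec.add_intCast_mul_mem hΩ0 hΩfin hG hAP', ?_,
    by simpa [tileCount, div_eq_mul_inv] using htile⟩
  obtain ⟨x, hx⟩ := htile.exists
  obtain ⟨m, hm⟩ := exists_tileCount_eq_natCast hΩb (inv_ne_zero hd.ne') x
  exact ⟨m, by exact_mod_cast hm ▸ hx ▸ hd, hx.symm.trans hm⟩

theorem stmt10 (n : ℕ) (hn : 0 < n) (aI r : Fin n → ℝ)
    (hr : ∀ j, 0 < r j) (hsum : ∑ j, r j = 1)
    (hdisj : Pairwise fun i j =>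
      Disjoint (Set.Ico (aI i) (aI i + r i)) (Set.Ico (aI j) (aI j + r j)))
    (Ω : Set ℝ) (hΩ : Ω = ⋃ j, Set.Ico (aI j) (aI j + r j))
    (Λ : Set ℝ) (hspec : IsSpectrum Ω Λ) (h0 : (0 : ℝ) ∈ Λ)
    (a d : ℝ) (hd : 0 < d)
    (hAP : ∀ i : ℕ, i < 2 * n → a + i * d ∈ Λ) :
    (∀ k : ℤ, a + k * d ∈ Λ) ∧
    (∃ m : ℕ, 0 < m ∧ d = m) ∧
    (∀ᵐ x : ℝ ∂volume, ∑' k : ℤ, Ω.indicator (fun _ => (1 : ℝ)) (x + k / d) = d) :=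
  stmt10_general n aI r hr hsum hdisj Ω hΩ Λ hspec a d hd hAP
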